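/- arXiv:1310.7559 — 2 statements merged into one kernel-verified Lean document; each statement's English description precedes it below -/
import Mathlib

section
/- Let d ≥ 1 and let χ : ℝ^d → ℝ be a smooth, compactly supported function. Define k(ε, ε′) := sup_{ξ ∈ ℝ^d} |𝓕χ(εξ) − 𝓕χ(ε′ξ)| · (1 + ‖ξ‖²)^{−1/2} for ε, ε′ > 0. Then k(ε, ε′) → 0 as ε, ε′ → 0⁺; that is, for every δ > 0 there exists η > 0 such that for all ε, ε′ ∈ (0, η) and all ξ ∈ ℝ^d one has |𝓕χ(εξ) − 𝓕χ(ε′ξ)| ≤ δ · (1 + ‖ξ‖²)^{1/2}. -/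
open MeasureTheory FourierTransform

/-- Core quantitative estimate of Lemma 2.3: the Fourier-side comparison of two
Friedrichs mollifiers, `sup_ξ |𝓕χ(εξ) − 𝓕χ(ε′ξ)| (1+‖ξ‖²)^{-1/2} → 0` as `ε, ε′ → 0⁺`. -/
theorem mollifier_fourier_difference_tendsto_zero
    (d : ℕ) (hd : 1 ≤ d) (χ : EuclideanSpace ℝ (Fin d) → ℝ)
    (hχ : ContDiff ℝ (⊤ : ℕ∞) χ) (hχsupp : HasCompactSupport χ) :
    ∀ δ > (0 : ℝ), ∃ η > (0 : ℝ), ∀ ε ε' : ℝ, 0 < ε → ε < η → 0 < ε' → ε' < η →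
      ∀ ξ : EuclideanSpace ℝ (Fin d),
        ‖𝓕 (fun x => (χ x : ℂ)) (ε • ξ) - 𝓕 (fun x => (χ x : ℂ)) (ε' • ξ)‖
          ≤ δ * (1 + ‖ξ‖ ^ 2) ^ ((1 : ℝ) / 2) := by
  intro δ hδ
  set f : EuclideanSpace ℝ (Fin d) → ℂ := fun x => (χ x : ℂ) with hf
  have hfc : Continuous f := Complex.continuous_ofReal.comp hχ.continuous
  have hfsupp : HasCompactSupport f := hχsupp.comp_left (g := fun r : ℝ => (r : ℂ)) rfl
  have hf_int : Integrable f := hfc.integrable_of_hasCompactSupport hfsupp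
  have hvf_int : Integrable (fun v => ‖v‖ * ‖f v‖) := by
    have hc : Continuous (fun v : EuclideanSpace ℝ (Fin d) => ‖v‖ * ‖f v‖) :=
      continuous_norm.mul hfc.norm
    have hs : HasCompactSupport (fun v : EuclideanSpace ℝ (Fin d) => ‖v‖ * ‖f v‖) :=
      HasCompactSupport.mul_left (f := fun v => ‖v‖) hfsupp.norm
    exact hc.integrable_of_hasCompactSupport hs
  obtain ⟨L, hL0, hderiv⟩ : ∃ L : ℝ, 0 ≤ L ∧ ∀ x, ‖fderiv ℝ (𝓕 f) x‖ ≤ L := by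
    refine ⟨∫ v, 2 * Real.pi * ‖v‖ * ‖f v‖, ?_, ?_⟩
    · apply integral_nonneg
      intro v
      positivity
    intro x
    rw [Real.fderiv_fourier hf_int hvf_int]
    apply (VectorFourier.norm_fourierIntegral_le_integral_norm _ _ _ _ _).trans
    apply integral_mono_of_nonneg
    · exact Filter.Eventually.of_forall fun v => norm_nonneg _
    · have := (hvf_int.const_mul (2 * Real.pi))
      simpa [mul_assoc] using this
    · refine Filter.Eventually.of_forall fun v => ?_
      have := VectorFourier.norm_fourierSMulRight_le (innerSL ℝ) f v
      apply this.trans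
      show 2 * Real.pi * ‖innerSL ℝ (E := EuclideanSpace ℝ (Fin d))‖ * ‖v‖ * ‖f v‖
          ≤ 2 * Real.pi * ‖v‖ * ‖f v‖
      have h1 : ‖innerSL ℝ (E := EuclideanSpace ℝ (Fin d))‖ ≤ 1 := norm_innerSL_le ℝ
      calc 2 * Real.pi * ‖innerSL ℝ (E := EuclideanSpace ℝ (Fin d))‖ * ‖v‖ * ‖f v‖
          ≤ 2 * Real.pi * 1 * ‖v‖ * ‖f v‖ := by gcongr
        _ = 2 * Real.pi * ‖v‖ * ‖f v‖ := by ring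
  have hdiff : Differentiable ℝ (𝓕 f) := Real.differentiable_fourier hf_int hvf_int
  refine ⟨δ / (L + 1), div_pos hδ (by linarith), fun ε ε' hε hεη hε' hε'η ξ => ?_⟩
  have key : ‖𝓕 f (ε • ξ) - 𝓕 f (ε' • ξ)‖ ≤ L * ‖ε • ξ - ε' • ξ‖ := by
    refine Convex.norm_image_sub_le_of_norm_fderiv_le
      (fun x _ => hdiff.differentiableAt) (fun x _ => hderiv x) convex_univ
      (Set.mem_univ _) (Set.mem_univ _)
  have h1 : ‖ε • ξ - ε' • ξ‖ = |ε - ε'| * ‖ξ‖ := by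
    rw [← sub_smul, norm_smul, Real.norm_eq_abs]
  have h2 : |ε - ε'| ≤ δ / (L + 1) := by
    rw [abs_sub_le_iff]
    constructor <;> linarith
  have h3 : ‖ξ‖ ≤ (1 + ‖ξ‖ ^ 2) ^ ((1 : ℝ) / 2) := by
    rw [← Real.sqrt_eq_rpow]
    calc ‖ξ‖ = Real.sqrt (‖ξ‖ ^ 2) := (Real.sqrt_sq (norm_nonneg ξ)).symm
      _ ≤ Real.sqrt (1 + ‖ξ‖ ^ 2) := Real.sqrt_le_sqrt (by linarith)
  have hLδ : L * (δ / (L + 1)) ≤ δ := by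
    rw [mul_div_assoc', div_le_iff₀ (by linarith)]
    nlinarith
  calc ‖𝓕 f (ε • ξ) - 𝓕 f (ε' • ξ)‖
      ≤ L * (|ε - ε'| * ‖ξ‖) := by rw [← h1]; exact key
    _ ≤ L * ((δ / (L + 1)) * ‖ξ‖) := by gcongr
    _ = (L * (δ / (L + 1))) * ‖ξ‖ := by ring
    _ ≤ δ * ‖ξ‖ := by gcongr
    _ ≤ δ * (1 + ‖ξ‖ ^ 2) ^ ((1 : ℝ) / 2) := by gcongr
end

section
/- Let d ≥ 1 and let χ : ℝ^d → ℝ be a smooth, compactly supported function. Then for every δ > 0 there exists η > 0 such that for all ε, ε′ ∈ (0, η), every real number s, and every measurable function g : ℝ^d → ℂ, one has ∫_{ℝ^d} (1 + ‖ξ‖²)^s · |𝓕χ(εξ) − 𝓕χ(ε′ξ)|² · |g(ξ)|² dξ ≤ δ² · ∫_{ℝ^d} (1 + ‖ξ‖²)^{s+1} · |g(ξ)|² dξ (both sides possibly infinite). -/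
open MeasureTheory FourierTransform

set_option maxHeartbeats 1000000 in
/-- Lemma 2.3 on the Fourier side: for every `δ > 0` there is `η > 0` such that for all
`ε, ε′ ∈ (0, η)`, every `s : ℝ` and every measurable `g`,
`∫ (1+‖ξ‖²)^s |𝓕χ(εξ) − 𝓕χ(ε′ξ)|² |g(ξ)|² dξ ≤ δ² ∫ (1+‖ξ‖²)^{s+1} |g(ξ)|² dξ`
(both sides possibly infinite). -/
theorem mollifier_fourier_difference_sobolev_estimate
    (d : ℕ) (hd : 1 ≤ d) (χ : EuclideanSpace ℝ (Fin d) → ℝ)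
    (hχ : ContDiff ℝ (⊤ : ℕ∞) χ) (hχsupp : HasCompactSupport χ) :
    ∀ δ > (0 : ℝ), ∃ η > (0 : ℝ), ∀ ε ε' : ℝ, 0 < ε → ε < η → 0 < ε' → ε' < η →
      ∀ (s : ℝ) (g : EuclideanSpace ℝ (Fin d) → ℂ), Measurable g →
        ∫⁻ ξ, ENNReal.ofReal
            ((1 + ‖ξ‖ ^ 2) ^ s *
              ‖𝓕 (fun x => (χ x : ℂ)) (ε • ξ) - 𝓕 (fun x => (χ x : ℂ)) (ε' • ξ)‖ ^ 2 *
              ‖g ξ‖ ^ 2)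
          ≤ ENNReal.ofReal (δ ^ 2) *
            ∫⁻ ξ, ENNReal.ofReal ((1 + ‖ξ‖ ^ 2) ^ (s + 1) * ‖g ξ‖ ^ 2) := by
  intro δ hδ
  set f : EuclideanSpace ℝ (Fin d) → ℂ := fun x => (χ x : ℂ) with hf
  have hfc : Continuous f := Complex.continuous_ofReal.comp hχ.continuous
  have hfs : HasCompactSupport f := hχsupp.comp_left (g := Complex.ofReal) Complex.ofReal_zero
  have hf_int : Integrable f := hfc.integrable_of_hasCompactSupport hfs
  have hvf_int : Integrable (fun v => ‖v‖ * ‖f v‖) := by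
    apply Continuous.integrable_of_hasCompactSupport
    · exact continuous_norm.mul (hfc.norm)
    · apply HasCompactSupport.mul_left hfs.norm
  -- Lipschitz constant for 𝓕 f
  set C : ℝ := ∫ v, ‖VectorFourier.fourierSMulRight (innerSL ℝ) f v‖ with hC
  have hC0 : 0 ≤ C := integral_nonneg fun v => norm_nonneg _
  have hlip : ∀ a b, ‖𝓕 f a - 𝓕 f b‖ ≤ C * ‖a - b‖ := by
    intro a b
    apply (convex_univ (𝕜 := ℝ)
        (E := EuclideanSpace ℝ (Fin d))).norm_image_sub_le_of_norm_hasFDerivWithin_le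
      (f := 𝓕 f) (f' := fun x => 𝓕 (VectorFourier.fourierSMulRight (innerSL ℝ) f) x)
      (fun x _ => (Real.hasFDerivAt_fourier hf_int hvf_int x).hasFDerivWithinAt)
      (fun x _ => ?_) (Set.mem_univ b) (Set.mem_univ a)
    exact VectorFourier.norm_fourierIntegral_le_integral_norm _ _ _ _ _
  refine ⟨δ / (C + 1), by positivity, fun ε ε' hε hεη hε' hε'η s g _hg => ?_⟩
  have key : ∀ ξ : EuclideanSpace ℝ (Fin d),
      (1 + ‖ξ‖ ^ 2) ^ s * ‖𝓕 f (ε • ξ) - 𝓕 f (ε' • ξ)‖ ^ 2 * ‖g ξ‖ ^ 2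
        ≤ δ ^ 2 * ((1 + ‖ξ‖ ^ 2) ^ (s + 1) * ‖g ξ‖ ^ 2) := by
    intro ξ
    have h1 : (0:ℝ) < 1 + ‖ξ‖ ^ 2 := by positivity
    have hlipξ : ‖𝓕 f (ε • ξ) - 𝓕 f (ε' • ξ)‖ ≤ δ * ‖ξ‖ := by
      refine (hlip _ _).trans ?_
      have : ε • ξ - ε' • ξ = (ε - ε') • ξ := (sub_smul ε ε' ξ).symm
      rw [this, norm_smul, Real.norm_eq_abs, ← mul_assoc]
      have habs : |ε - ε'| ≤ δ / (C + 1) := by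
        rw [abs_sub_le_iff]; constructor <;> linarith
      have : C * |ε - ε'| ≤ δ := by
        calc C * |ε - ε'| ≤ (C + 1) * (δ / (C + 1)) := by
              apply mul_le_mul (by linarith) habs (abs_nonneg _) (by linarith)
          _ = δ := by field_simp
      exact mul_le_mul_of_nonneg_right this (norm_nonneg _)
    have hsq : ‖𝓕 f (ε • ξ) - 𝓕 f (ε' • ξ)‖ ^ 2 ≤ δ ^ 2 * ‖ξ‖ ^ 2 := by
      rw [← mul_pow]
      exact pow_le_pow_left₀ (norm_nonneg _) hlipξ 2
    have hsq' : ‖𝓕 f (ε • ξ) - 𝓕 f (ε' • ξ)‖ ^ 2 ≤ δ ^ 2 * (1 + ‖ξ‖ ^ 2) := by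
      refine hsq.trans ?_
      have : (‖ξ‖:ℝ) ^ 2 ≤ 1 + ‖ξ‖ ^ 2 := by linarith
      nlinarith [sq_nonneg δ]
    have hr : (1 + ‖ξ‖ ^ 2) ^ (s + 1) = (1 + ‖ξ‖ ^ 2) ^ s * (1 + ‖ξ‖ ^ 2) :=
      Real.rpow_add_one (ne_of_gt h1) s
    calc (1 + ‖ξ‖ ^ 2) ^ s * ‖𝓕 f (ε • ξ) - 𝓕 f (ε' • ξ)‖ ^ 2 * ‖g ξ‖ ^ 2
        ≤ (1 + ‖ξ‖ ^ 2) ^ s * (δ ^ 2 * (1 + ‖ξ‖ ^ 2)) * ‖g ξ‖ ^ 2 := by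
          apply mul_le_mul_of_nonneg_right _ (by positivity)
          exact mul_le_mul_of_nonneg_left hsq' (Real.rpow_nonneg (le_of_lt h1) s)
      _ = δ ^ 2 * ((1 + ‖ξ‖ ^ 2) ^ (s + 1) * ‖g ξ‖ ^ 2) := by rw [hr]; ring
  calc ∫⁻ ξ, ENNReal.ofReal
          ((1 + ‖ξ‖ ^ 2) ^ s * ‖𝓕 f (ε • ξ) - 𝓕 f (ε' • ξ)‖ ^ 2 * ‖g ξ‖ ^ 2)
      ≤ ∫⁻ ξ, ENNReal.ofReal (δ ^ 2 * ((1 + ‖ξ‖ ^ 2) ^ (s + 1) * ‖g ξ‖ ^ 2)) :=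
        lintegral_mono fun ξ => ENNReal.ofReal_le_ofReal (key ξ)
    _ = ENNReal.ofReal (δ ^ 2) * ∫⁻ ξ, ENNReal.ofReal ((1 + ‖ξ‖ ^ 2) ^ (s + 1) * ‖g ξ‖ ^ 2) := by
        simp_rw [ENNReal.ofReal_mul (by positivity : (0:ℝ) ≤ δ ^ 2)]
        rw [lintegral_const_mul' _ _ ENNReal.ofReal_ne_top]
end
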